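/- arXiv:2401.06238 — 6 statements merged into one kernel-verified Lean document; each statement's English description precedes it below -/
import Mathlib

section
/- Let L > 0, D > 0 and ε > 0, let u : ℝ → ℝ be continuous on [−L/2, L/2] with transverse average ū, and let χ : ℝ → ℝ be continuously differentiable on [−L/2, L/2], with χ′ differentiable on (−L/2, L/2), satisfying D·χ″(y) = u(y) − ū for all y ∈ (−L/2, L/2) and χ′(−L/2) = χ′(L/2) = 0. Define the Taylor dispersion coefficient D_eff := ε·D·(1 + (ū·χ̄ − (u·χ)‾)/D), where χ̄ and (u·χ)‾ denote the transverse averages of χ and of y ↦ u(y)·χ(y). Then D_eff = ε·D + (ε·D/L)·∫_{−L/2}^{L/2} (χ′(y))² dy, and in particular D_eff ≥ ε·D. -/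
open MeasureTheory intervalIntegral Set

/-- The Taylor dispersion coefficient
`D_eff = ε D (1 + (ū χ̄ - (u χ)‾)/D)` built from the first-order corrector `χ`
(solving `D χ'' = u - ū` with homogeneous Neumann conditions) satisfies
`D_eff = ε D + (ε D / L) ∫ (χ')²`, and in particular `D_eff ≥ ε D`. -/
theorem stmt_5 (L D ε : ℝ) (hL : 0 < L) (hD : 0 < D) (hε : 0 < ε)
    (u : ℝ → ℝ) (hu : ContinuousOn u (Set.Icc (-(L/2)) (L/2)))
    (ubar : ℝ) (hubar : ubar = (1/L) * ∫ y in (-(L/2))..(L/2), u y)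
    (χ χ' χ'' : ℝ → ℝ)
    (hd : ∀ y ∈ Set.Icc (-(L/2)) (L/2),
      HasDerivWithinAt χ (χ' y) (Set.Icc (-(L/2)) (L/2)) y)
    (hc : ContinuousOn χ' (Set.Icc (-(L/2)) (L/2)))
    (hdd : ∀ y ∈ Set.Ioo (-(L/2)) (L/2), HasDerivAt χ' (χ'' y) y)
    (hcell : ∀ y ∈ Set.Ioo (-(L/2)) (L/2), D * χ'' y = u y - ubar)
    (hbl : χ' (-(L/2)) = 0) (hbr : χ' (L/2) = 0)
    (χbar uχbar Deff : ℝ)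
    (hχbar : χbar = (1/L) * ∫ y in (-(L/2))..(L/2), χ y)
    (huχbar : uχbar = (1/L) * ∫ y in (-(L/2))..(L/2), u y * χ y)
    (hDeff : Deff = ε * D * (1 + (ubar * χbar - uχbar) / D)) :
    (Deff = ε * D + (ε * D / L) * ∫ y in (-(L/2))..(L/2), (χ' y)^2) ∧
    ε * D ≤ Deff := by
  have hab : -(L/2) ≤ L/2 := by linarith
  have hIcc : Set.uIcc (-(L/2)) (L/2) = Set.Icc (-(L/2)) (L/2) := Set.uIcc_of_le hab
  have hχcont : ContinuousOn χ (Set.Icc (-(L/2)) (L/2)) :=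
    fun x hx => (hd x hx).continuousWithinAt
  -- integrabilities
  have hint_χ' : IntervalIntegrable χ' volume (-(L/2)) (L/2) := by
    apply ContinuousOn.intervalIntegrable; rwa [hIcc]
  have hint_χ : IntervalIntegrable χ volume (-(L/2)) (L/2) := by
    apply ContinuousOn.intervalIntegrable; rwa [hIcc]
  have hint_uχ : IntervalIntegrable (fun y => u y * χ y) volume (-(L/2)) (L/2) := by
    apply ContinuousOn.intervalIntegrable; rw [hIcc]; exact hu.mul hχcont
  have hgcont : ContinuousOn (fun y => (u y - ubar) / D) (Set.Icc (-(L/2)) (L/2)) :=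
    (hu.sub continuousOn_const).div_const D
  have hint_g : IntervalIntegrable (fun y => (u y - ubar) / D) volume (-(L/2)) (L/2) := by
    apply ContinuousOn.intervalIntegrable; rwa [hIcc]
  have hb_ne : ∀ᵐ x ∂(volume : Measure ℝ), x ≠ L/2 := by
    rw [MeasureTheory.ae_iff]
    simpa using Real.volume_singleton (a := L/2)
  have heq_ioo : ∀ x ∈ Set.Ioo (-(L/2)) (L/2), χ'' x = (u x - ubar) / D := by
    intro x hx
    have := hcell x hx
    field_simp
    linarith
  have hint_χ'' : IntervalIntegrable χ'' volume (-(L/2)) (L/2) := by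
    rw [intervalIntegrable_iff_integrableOn_Ioo_of_le hab]
    apply (((intervalIntegrable_iff_integrableOn_Ioo_of_le hab).1 hint_g).congr_fun ?_
      measurableSet_Ioo)
    intro x hx; exact (heq_ioo x hx).symm
  -- integration by parts
  have hparts : ∫ x in (-(L/2))..(L/2), χ' x * χ' x
      = χ' (L/2) * χ (L/2) - χ' (-(L/2)) * χ (-(L/2))
        - ∫ x in (-(L/2))..(L/2), χ'' x * χ x := by
    apply intervalIntegral.integral_mul_deriv_eq_deriv_mul_of_hasDeriv_right
    · rwa [hIcc]
    · rwa [hIcc]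
    · intro x hx
      rw [min_eq_left hab, max_eq_right hab] at hx
      exact ((hdd x hx).hasDerivWithinAt)
    · intro x hx
      rw [min_eq_left hab, max_eq_right hab] at hx
      exact (((hd x (Set.mem_Icc_of_Ioo hx)).hasDerivAt
        (Icc_mem_nhds hx.1 hx.2)).hasDerivWithinAt)
    · exact hint_χ''
    · exact hint_χ'
  -- replace χ'' by (u - ubar)/D inside the integral
  have hcongr : (∫ x in (-(L/2))..(L/2), χ'' x * χ x)
      = ∫ x in (-(L/2))..(L/2), ((u x - ubar) / D) * χ x := by
    apply intervalIntegral.integral_congr_ae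
    filter_upwards [hb_ne] with x hx hxmem
    rw [Set.uIoc_of_le hab] at hxmem
    have hxo : x ∈ Set.Ioo (-(L/2)) (L/2) :=
      ⟨hxmem.1, lt_of_le_of_ne hxmem.2 hx⟩
    rw [heq_ioo x hxo]
  have hsplit : (∫ x in (-(L/2))..(L/2), ((u x - ubar) / D) * χ x)
      = (1/D) * (∫ y in (-(L/2))..(L/2), u y * χ y)
        - (ubar/D) * (∫ y in (-(L/2))..(L/2), χ y) := by
    have : (fun x => ((u x - ubar) / D) * χ x)
        = fun x => (1/D) * (u x * χ x) - (ubar/D) * χ x := by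
      funext x; field_simp
    rw [this, intervalIntegral.integral_sub ((hint_uχ.const_mul _)) (hint_χ.const_mul _),
      intervalIntegral.integral_const_mul, intervalIntegral.integral_const_mul]
  have hsq : ∫ y in (-(L/2))..(L/2), (χ' y)^2 = ∫ x in (-(L/2))..(L/2), χ' x * χ' x := by
    apply intervalIntegral.integral_congr; intro x _; simp [pow_two]
  set A := ∫ y in (-(L/2))..(L/2), u y * χ y with hA
  set B := ∫ y in (-(L/2))..(L/2), χ y with hB
  have hI : ∫ y in (-(L/2))..(L/2), (χ' y)^2 = -((1/D) * A - (ubar/D) * B) := by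
    rw [hsq, hparts, hbl, hbr, hcongr, hsplit]; ring
  have hmain : Deff = ε * D + (ε * D / L) * ∫ y in (-(L/2))..(L/2), (χ' y)^2 := by
    rw [hI, hDeff, hχbar, huχbar]
    field_simp
    ring
  refine ⟨hmain, ?_⟩
  have hInn : 0 ≤ ∫ y in (-(L/2))..(L/2), (χ' y)^2 :=
    intervalIntegral.integral_nonneg hab (fun x _ => sq_nonneg _)
  have h0 : 0 ≤ (ε * D / L) * ∫ y in (-(L/2))..(L/2), (χ' y)^2 :=
    mul_nonneg (by positivity) hInn
  rw [hmain]; linarith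
end

section
/- Let L > 0, D > 0, σ, f, ū ∈ ℝ, let u : ℝ → ℝ be continuous on [−L/2, L/2] with transverse average ū, let i ≥ 1 be an integer, and let χ_{i−1}, χ_i, χ_{i+1} : ℝ → ℝ with χ_{i+1} twice differentiable on (−L/2, L/2) satisfying D·χ_{i+1}″(y) = φ(y) − φ̄ there, where φ(y) := (u(y) − ū)·χ_i(y) − D·χ_{i−1}(y) and φ̄ is its transverse average. Let c₀ : ℝ × ℝ → ℝ be infinitely differentiable with ∂_t c₀ + ū·∂_x c₀ + σ·c₀ = f everywhere, and set c_j(x,y,t) := χ_j(y)·∂_{x}^{j} c₀(x,t) for j = i−1, i, i+1. Then for all (x,t) and all y ∈ (−L/2, L/2): ∂_t c_i − D·∂_{xx} c_{i−1} − D·∂_{yy} c_{i+1} + u(y)·∂_x c_i + σ·c_i = φ̄·∂_{x}^{i+1} c₀(x,t). -/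
noncomputable def dxOp : (ℝ → ℝ → ℝ) → ℝ → ℝ → ℝ :=
  fun f x t => deriv (fun x' => f x' t) x

noncomputable def ptOp : (ℝ → ℝ → ℝ → ℝ) → ℝ → ℝ → ℝ → ℝ :=
  fun f x y t => deriv (fun t' => f x y t') t

noncomputable def pxOp : (ℝ → ℝ → ℝ → ℝ) → ℝ → ℝ → ℝ → ℝ :=
  fun f x y t => deriv (fun x' => f x' y t) x

noncomputable def pxxOp : (ℝ → ℝ → ℝ → ℝ) → ℝ → ℝ → ℝ → ℝ :=
  fun f x y t => deriv (fun x' => deriv (fun x'' => f x'' y t) x') x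

noncomputable def pyyOp : (ℝ → ℝ → ℝ → ℝ) → ℝ → ℝ → ℝ → ℝ :=
  fun f x y t => deriv (fun y' => deriv (fun y'' => f x y'' t) y') y

namespace Stmt8Aux

lemma pd_contDiff {F : ℝ × ℝ → ℝ} (hF : ContDiff ℝ (⊤ : ℕ∞) F) (v : ℝ × ℝ) :
    ContDiff ℝ (⊤ : ℕ∞) (fun p => fderiv ℝ F p v) :=
  (hF.fderiv_right ((by simp))).clm_apply contDiff_const

lemma hasDerivAt_slice_x {F : ℝ × ℝ → ℝ} (hF : ContDiff ℝ (⊤ : ℕ∞) F) (x t : ℝ) :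
    HasDerivAt (fun x' => F (x', t)) (fderiv ℝ F (x, t) (1, 0)) x := by
  have h1 : HasDerivAt (fun x' : ℝ => (x', t)) ((1 : ℝ), (0 : ℝ)) x :=
    HasDerivAt.prodMk (hasDerivAt_id x) (hasDerivAt_const x t)
  exact ((hF.differentiable (by simp) (x, t)).hasFDerivAt).comp_hasDerivAt x h1

lemma hasDerivAt_slice_t {F : ℝ × ℝ → ℝ} (hF : ContDiff ℝ (⊤ : ℕ∞) F) (x t : ℝ) :
    HasDerivAt (fun t' => F (x, t')) (fderiv ℝ F (x, t) (0, 1)) t := by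
  have h1 : HasDerivAt (fun t' : ℝ => (x, t')) ((0 : ℝ), (1 : ℝ)) t :=
    HasDerivAt.prodMk (hasDerivAt_const t x) (hasDerivAt_id t)
  exact ((hF.differentiable (by simp) (x, t)).hasFDerivAt).comp_hasDerivAt t h1

lemma pd_swap {F : ℝ × ℝ → ℝ} (hF : ContDiff ℝ (⊤ : ℕ∞) F) (p : ℝ × ℝ) (v w : ℝ × ℝ) :
    fderiv ℝ (fun q => fderiv ℝ F q v) p w = fderiv ℝ (fun q => fderiv ℝ F q w) p v := by
  have hdF : ContDiff ℝ (⊤ : ℕ∞) (fderiv ℝ F) := hF.fderiv_right (by simp)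
  have hd : DifferentiableAt ℝ (fderiv ℝ F) p := hdF.differentiable (by simp) p
  have key : ∀ a b : ℝ × ℝ,
      fderiv ℝ (fun q => fderiv ℝ F q a) p b = fderiv ℝ (fderiv ℝ F) p b a := by
    intro a b
    rw [fderiv_clm_apply hd (differentiableAt_const a)]
    simp
  rw [key v w, key w v]
  exact second_derivative_symmetric
    (fun y => (hF.differentiable (by simp) y).hasFDerivAt) hd.hasFDerivAt w v

/-- iterated x-partial derivative -/
noncomputable def gseq (F : ℝ × ℝ → ℝ) : ℕ → (ℝ × ℝ → ℝ)
  | 0 => F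
  | (j+1) => fun p => fderiv ℝ (gseq F j) p (1, 0)

lemma gseq_contDiff {F : ℝ × ℝ → ℝ} (hF : ContDiff ℝ (⊤ : ℕ∞) F) :
    ∀ j, ContDiff ℝ (⊤ : ℕ∞) (gseq F j)
  | 0 => hF
  | (j+1) => pd_contDiff (gseq_contDiff hF j) _

lemma gseq_eq_iterate {c₀ : ℝ → ℝ → ℝ}
    (hF : ContDiff ℝ (⊤ : ℕ∞) (fun p : ℝ × ℝ => c₀ p.1 p.2)) :
    ∀ j x t, (dxOp^[j] c₀) x t = gseq (fun p : ℝ × ℝ => c₀ p.1 p.2) j (x, t) := by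
  intro j
  induction j with
  | zero => intro x t; rfl
  | succ j ih =>
    intro x t
    rw [Function.iterate_succ_apply']
    show deriv (fun x' => (dxOp^[j] c₀) x' t) x = _
    have : (fun x' => (dxOp^[j] c₀) x' t)
        = fun x' => gseq (fun p : ℝ × ℝ => c₀ p.1 p.2) j (x', t) := funext fun x' => ih x' t
    rw [this]
    exact (hasDerivAt_slice_x (gseq_contDiff hF j) x t).deriv

lemma cascade_step {G : ℝ × ℝ → ℝ} (hG : ContDiff ℝ (⊤ : ℕ∞) G) {ub s K : ℝ}
    (heq : ∀ p, fderiv ℝ G p (0, 1) + (ub * fderiv ℝ G p (1, 0) + s * G p) = K)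
    (p : ℝ × ℝ) :
    fderiv ℝ (fun q => fderiv ℝ G q (1, 0)) p (0, 1)
      + (ub * fderiv ℝ (fun q => fderiv ℝ G q (1, 0)) p (1, 0)
        + s * fderiv ℝ G p (1, 0)) = 0 := by
  set A := fun q : ℝ × ℝ => fderiv ℝ G q ((0 : ℝ), (1 : ℝ)) with hA
  set B := fun q : ℝ × ℝ => fderiv ℝ G q ((1 : ℝ), (0 : ℝ)) with hB
  have hAd : Differentiable ℝ A := (pd_contDiff hG _).differentiable (by simp)
  have hBd : Differentiable ℝ B := (pd_contDiff hG _).differentiable (by simp)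
  have hGd : Differentiable ℝ G := hG.differentiable (by simp)
  have hfun : (fun q => A q + (ub * B q + s * G q)) = fun _ => K := funext heq
  have h0 : fderiv ℝ (fun q => A q + (ub * B q + s * G q)) p = 0 := by
    rw [hfun]; exact fderiv_const_apply K
  have h1 : fderiv ℝ (fun q => A q + (ub * B q + s * G q)) p =
      fderiv ℝ A p + (ub • fderiv ℝ B p + s • fderiv ℝ G p) := by
    rw [fderiv_fun_add (hAd p) (((hBd p).const_mul ub).fun_add ((hGd p).const_mul s)),
      fderiv_fun_add ((hBd p).const_mul ub) ((hGd p).const_mul s),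
      fderiv_const_mul (hBd p), fderiv_const_mul (hGd p)]
  rw [h0] at h1
  have h2 : (0 : (ℝ × ℝ) →L[ℝ] ℝ) ((1 : ℝ), (0 : ℝ))
      = (fderiv ℝ A p + (ub • fderiv ℝ B p + s • fderiv ℝ G p)) (1, 0) := by rw [h1]
  simp only [ContinuousLinearMap.zero_apply, ContinuousLinearMap.add_apply,
    ContinuousLinearMap.coe_smul', Pi.smul_apply, smul_eq_mul] at h2
  have h3 : fderiv ℝ A p ((1 : ℝ), (0 : ℝ)) = fderiv ℝ B p (0, 1) := pd_swap hG p _ _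
  rw [h3] at h2
  linarith

end Stmt8Aux

open Stmt8Aux
/-- The order-`i` cascade equation of the high-order two-scale
expansion: with `c_j(x,y,t) = χ_j(y) ∂ₓʲ c₀(x,t)` for `j = i-1, i, i+1`, where
`χ_{i+1}` solves `D χ_{i+1}'' = φ - φ̄` with `φ = (u - ū) χ_i - D χ_{i-1}`, and `c₀`
solves the leading order equation, one has
`∂ₜ c_i - D ∂ₓₓ c_{i-1} - D ∂_{yy} c_{i+1} + u ∂ₓ c_i + σ c_i = φ̄ ∂ₓ^{i+1} c₀`. -/
theorem stmt_8 (L D σ f : ℝ) (hL : 0 < L) (hD : 0 < D)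
    (u : ℝ → ℝ) (hu : ContinuousOn u (Set.Icc (-(L/2)) (L/2)))
    (ubar : ℝ) (hubar : ubar = (1/L) * ∫ y in (-(L/2))..(L/2), u y)
    (i : ℕ) (hi : 1 ≤ i)
    (χim χi χip χip' χip'' : ℝ → ℝ)
    (φ : ℝ → ℝ) (hφ : ∀ y, φ y = (u y - ubar) * χi y - D * χim y)
    (φbar : ℝ) (hφbar : φbar = (1/L) * ∫ y in (-(L/2))..(L/2), φ y)
    (hχip' : ∀ y ∈ Set.Ioo (-(L/2)) (L/2), HasDerivAt χip (χip' y) y)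
    (hχip'' : ∀ y ∈ Set.Ioo (-(L/2)) (L/2), HasDerivAt χip' (χip'' y) y)
    (hcell : ∀ y ∈ Set.Ioo (-(L/2)) (L/2), D * χip'' y = φ y - φbar)
    (c₀ : ℝ → ℝ → ℝ)
    (hsmooth : ContDiff ℝ (⊤ : ℕ∞) (fun p : ℝ × ℝ => c₀ p.1 p.2))
    (hleading : ∀ x t,
      deriv (fun t' => c₀ x t') t + ubar * dxOp c₀ x t + σ * c₀ x t = f)
    (cim ci cip : ℝ → ℝ → ℝ → ℝ)
    (hcim : ∀ x y t, cim x y t = χim y * (dxOp^[i-1] c₀) x t)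
    (hci : ∀ x y t, ci x y t = χi y * (dxOp^[i] c₀) x t)
    (hcip : ∀ x y t, cip x y t = χip y * (dxOp^[i+1] c₀) x t) :
    ∀ (x t : ℝ), ∀ y ∈ Set.Ioo (-(L/2)) (L/2),
      ptOp ci x y t - D * pxxOp cim x y t - D * pyyOp cip x y t
        + u y * pxOp ci x y t + σ * ci x y t
        = φbar * (dxOp^[i+1] c₀) x t := by
  obtain ⟨k, rfl⟩ : ∃ k, i = k + 1 := ⟨i - 1, (Nat.succ_pred_eq_of_pos hi).symm⟩
  set F : ℝ × ℝ → ℝ := fun p => c₀ p.1 p.2 with hFdef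
  have hF : ContDiff ℝ (⊤ : ℕ∞) F := hsmooth
  have hit : ∀ j x t, (dxOp^[j] c₀) x t = gseq F j (x, t) := gseq_eq_iterate hF
  -- leading order equation in fderiv form
  have base : ∀ p : ℝ × ℝ, fderiv ℝ F p (0, 1)
      + (ubar * fderiv ℝ F p (1, 0) + σ * F p) = f := by
    rintro ⟨x, t⟩
    have h1 : deriv (fun t' => c₀ x t') t = fderiv ℝ F (x, t) (0, 1) :=
      (hasDerivAt_slice_t hF x t).deriv
    have h2 : dxOp c₀ x t = fderiv ℝ F (x, t) (1, 0) :=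
      (hasDerivAt_slice_x hF x t).deriv
    have := hleading x t
    rw [h1, h2] at this
    show fderiv ℝ F (x, t) (0, 1) + (ubar * fderiv ℝ F (x, t) (1, 0) + σ * c₀ x t) = f
    linarith
  -- cascade of equations
  have casc : ∀ j, ∀ p : ℝ × ℝ, fderiv ℝ (gseq F (j + 1)) p (0, 1)
      + (ubar * gseq F (j + 2) p + σ * gseq F (j + 1) p) = 0 := by
    intro j
    induction j with
    | zero => exact cascade_step hF base
    | succ j ih => exact cascade_step (gseq_contDiff hF (j + 1)) ih
  intro x t y hy
  have hyn : Set.Ioo (-(L/2)) (L/2) ∈ nhds y := isOpen_Ioo.mem_nhds hy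
  set G1 : ℝ := gseq F (k + 1) (x, t) with hG1
  set G2 : ℝ := gseq F (k + 2) (x, t) with hG2
  -- ptOp ci
  have hpt : ptOp ci x y t = χi y * fderiv ℝ (gseq F (k + 1)) (x, t) (0, 1) := by
    show deriv (fun t' => ci x y t') t = _
    have : (fun t' => ci x y t') = fun t' => χi y * gseq F (k + 1) (x, t') := by
      funext t'; rw [hci, hit]
    rw [this]
    exact (((hasDerivAt_slice_t (gseq_contDiff hF (k + 1)) x t)).const_mul (χi y)).deriv
  -- pxOp ci
  have hpx : pxOp ci x y t = χi y * G2 := by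
    show deriv (fun x' => ci x' y t) x = _
    have : (fun x' => ci x' y t) = fun x' => χi y * gseq F (k + 1) (x', t) := by
      funext x'; rw [hci, hit]
    rw [this]
    exact (((hasDerivAt_slice_x (gseq_contDiff hF (k + 1)) x t)).const_mul (χi y)).deriv
  -- pxxOp cim
  have hpxx : pxxOp cim x y t = χim y * G2 := by
    show deriv (fun x' => deriv (fun x'' => cim x'' y t) x') x = _
    have hinner : (fun x' => deriv (fun x'' => cim x'' y t) x')
        = fun x' => χim y * gseq F (k + 1) (x', t) := by
      funext x'
      have : (fun x'' => cim x'' y t) = fun x'' => χim y * gseq F k (x'', t) := by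
        funext x''; rw [hcim]; simp only [Nat.add_sub_cancel]; rw [hit]
      rw [this]
      exact (((hasDerivAt_slice_x (gseq_contDiff hF k) x' t)).const_mul (χim y)).deriv
    rw [hinner]
    exact (((hasDerivAt_slice_x (gseq_contDiff hF (k + 1)) x t)).const_mul (χim y)).deriv
  -- pyyOp cip
  have hpyy : pyyOp cip x y t = χip'' y * G2 := by
    show deriv (fun y' => deriv (fun y'' => cip x y'' t) y') y = _
    have hev : (fun y' => χip' y' * G2)
        =ᶠ[nhds y] (fun y' => deriv (fun y'' => cip x y'' t) y') := by
      filter_upwards [hyn] with y' hy'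
      have : (fun y'' => cip x y'' t) = fun y'' => χip y'' * G2 := by
        funext y''; rw [hcip, hit]
      rw [this]
      exact ((hχip' y' hy').mul_const G2).deriv.symm
    rw [← hev.deriv_eq]
    exact ((hχip'' y hy).mul_const G2).deriv
  have hciv : ci x y t = χi y * G1 := by rw [hci, hit]
  have hrhs : (dxOp^[k + 1 + 1] c₀) x t = G2 := hit (k + 2) x t
  have hc := casc k (x, t)
  have hcell' : D * χip'' y = (u y - ubar) * χi y - D * χim y - φbar := by
    rw [hcell y hy, hφ y]
  rw [hpt, hpx, hpxx, hpyy, hciv, hrhs]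
  rw [← hG2] at hc
  linear_combination χi y * hc - G2 * hcell'
end

section
/- Let L > 0 and D > 0 and let u : ℝ → ℝ be continuous on [−L/2, L/2] with transverse average ū. Define recursively χ₋₁ :≡ 0, χ₀ :≡ 1, and for every integer i ≥ 0: φ_{i+1}(y) := (u(y) − ū)·χ_i(y) − D·χ_{i−1}(y), Φ_{i+1}(y) := ∫_{−L/2}^{y} φ_{i+1}(s) ds, Ψ_{i+1}(y) := ∫_{−L/2}^{y} Φ_{i+1}(s) ds, and χ_{i+1}(y) := (1/D)·(Ψ_{i+1}(y) − ((L/2)·y + y²/2)·φ̄_{i+1}), where φ̄_{i+1} is the transverse average of φ_{i+1}. Then for every i ≥ 0, χ_i is continuously differentiable on [−L/2, L/2]; and for every i ≥ 0, χ_{i+1}′(−L/2) = χ_{i+1}′(L/2) = 0 and D·χ_{i+1}″(y) = φ_{i+1}(y) − φ̄_{i+1} for all y ∈ (−L/2, L/2). -/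
open MeasureTheory intervalIntegral Set

/-- FTC-1 within an `Icc`, for a function continuous on the `Icc`. -/
lemma ftc_icc {a b : ℝ} {f : ℝ → ℝ} (hf : ContinuousOn f (Set.Icc a b)) {y : ℝ}
    (hy : y ∈ Set.Icc a b) :
    HasDerivWithinAt (fun x => ∫ t in a..x, f t) (f y) (Set.Icc a b) y := by
  haveI : Fact (y ∈ Set.Icc a b) := ⟨hy⟩
  have hint : IntervalIntegrable f volume a y := by
    apply ContinuousOn.intervalIntegrable
    apply hf.mono
    rw [Set.uIcc_of_le hy.1]
    exact Set.Icc_subset_Icc le_rfl hy.2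
  exact intervalIntegral.integral_hasDerivWithinAt_right hint
    (hf.stronglyMeasurableAtFilter_nhdsWithin measurableSet_Icc y) (hf y hy)

lemma ftc_icc_cont {a b : ℝ} {f : ℝ → ℝ} (hf : ContinuousOn f (Set.Icc a b)) :
    ContinuousOn (fun x => ∫ t in a..x, f t) (Set.Icc a b) :=
  fun y hy => (ftc_icc hf hy).continuousWithinAt

/-- FTC-1 at an interior point, full derivative. -/
lemma ftc_ioo {a b : ℝ} {f : ℝ → ℝ} (hf : ContinuousOn f (Set.Icc a b)) {y : ℝ}
    (hy : y ∈ Set.Ioo a b) :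
    HasDerivAt (fun x => ∫ t in a..x, f t) (f y) y := by
  have hymem : Set.Icc a b ∈ nhds y := Icc_mem_nhds hy.1 hy.2
  have hca : ContinuousAt f y := hf.continuousAt hymem
  have hint : IntervalIntegrable f volume a y := by
    apply ContinuousOn.intervalIntegrable
    apply hf.mono
    rw [Set.uIcc_of_le hy.1.le]
    exact Set.Icc_subset_Icc le_rfl hy.2.le
  exact intervalIntegral.integral_hasDerivAt_right hint
    ⟨Set.Icc a b, hymem, hf.aestronglyMeasurable measurableSet_Icc⟩ hca

set_option maxHeartbeats 1000000 in
/-- The whole hierarchy of HiPhomε corrector functions is well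
defined by the explicit double-integration formula
`χ_{i+1}(y) = (1/D)(Ψ_{i+1}(y) - ((L/2)y + y²/2) φ̄_{i+1})` with
`φ_{i+1} = (u - ū) χ_i - D χ_{i-1}` (and `χ_{-1} ≡ 0`, `χ₀ ≡ 1`): every `χ_i` is
continuously differentiable on `[-L/2, L/2]`, and every `χ_{i+1}` solves its
Neumann cell problem `D χ_{i+1}'' = φ_{i+1} - φ̄_{i+1}` on `(-L/2, L/2)` with
`χ_{i+1}'(±L/2) = 0`. -/
theorem stmt_10 (L D : ℝ) (hL : 0 < L) (hD : 0 < D)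
    (u : ℝ → ℝ) (hu : ContinuousOn u (Set.Icc (-(L/2)) (L/2)))
    (ubar : ℝ) (hubar : ubar = (1/L) * ∫ y in (-(L/2))..(L/2), u y)
    (χ : ℕ → ℝ → ℝ) (φ : ℕ → ℝ → ℝ) (φbar : ℕ → ℝ)
    (hχ0 : ∀ y, χ 0 y = 1)
    (hφ : ∀ (i : ℕ) (y : ℝ),
      φ (i+1) y = (u y - ubar) * χ i y - D * (if i = 0 then 0 else χ (i-1) y))
    (hφbar : ∀ i : ℕ, φbar (i+1) = (1/L) * ∫ y in (-(L/2))..(L/2), φ (i+1) y)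
    (hrec : ∀ (i : ℕ) (y : ℝ), χ (i+1) y =
      (1/D) * ((∫ s in (-(L/2))..y, ∫ r in (-(L/2))..s, φ (i+1) r) -
        ((L/2)*y + y^2/2) * φbar (i+1))) :
    (∀ i : ℕ, ∃ χ' : ℝ → ℝ, ContinuousOn χ' (Set.Icc (-(L/2)) (L/2)) ∧
      ∀ y ∈ Set.Icc (-(L/2)) (L/2),
        HasDerivWithinAt (χ i) (χ' y) (Set.Icc (-(L/2)) (L/2)) y) ∧
    (∀ i : ℕ, ∃ χ' χ'' : ℝ → ℝ,
      (∀ y ∈ Set.Icc (-(L/2)) (L/2),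
        HasDerivWithinAt (χ (i+1)) (χ' y) (Set.Icc (-(L/2)) (L/2)) y) ∧
      χ' (-(L/2)) = 0 ∧ χ' (L/2) = 0 ∧
      (∀ y ∈ Set.Ioo (-(L/2)) (L/2), HasDerivAt χ' (χ'' y) y) ∧
      (∀ y ∈ Set.Ioo (-(L/2)) (L/2), D * χ'' y = φ (i+1) y - φbar (i+1))) := by
  set a : ℝ := -(L/2) with ha
  set b : ℝ := L/2 with hb
  set S : Set ℝ := Set.Icc a b with hS
  have hD0 : D ≠ 0 := ne_of_gt hD
  have hL0 : L ≠ 0 := ne_of_gt hL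
  -- continuity of φ (i+1) from continuity of the previous two correctors
  have contφ : ∀ i : ℕ, ContinuousOn (χ i) S →
      ContinuousOn (fun y => if i = 0 then (0:ℝ) else χ (i-1) y) S →
      ContinuousOn (φ (i+1)) S := by
    intro i h1 h2
    have heq : φ (i+1) = fun y =>
        (u y - ubar) * χ i y - D * (if i = 0 then 0 else χ (i-1) y) := funext (hφ i)
    rw [heq]
    exact ((hu.sub continuousOn_const).mul h1).sub (continuousOn_const.mul h2)
  -- χ (i+1) continuous when φ (i+1) is
  have contχsucc : ∀ i : ℕ, ContinuousOn (φ (i+1)) S → ContinuousOn (χ (i+1)) S := by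
    intro i hφc
    have heq : χ (i+1) = fun y =>
        (1/D) * ((∫ s in a..y, ∫ r in a..s, φ (i+1) r) -
          ((L/2)*y + y^2/2) * φbar (i+1)) := funext (hrec i)
    rw [heq]
    have hΦc : ContinuousOn (fun s => ∫ r in a..s, φ (i+1) r) S := ftc_icc_cont hφc
    have hΨc : ContinuousOn (fun y => ∫ s in a..y, ∫ r in a..s, φ (i+1) r) S :=
      ftc_icc_cont hΦc
    exact continuousOn_const.mul (hΨc.sub (Continuous.continuousOn (by fun_prop) |>.mul
      continuousOn_const))
  -- all correctors are continuous
  have contχ : ∀ i : ℕ, ContinuousOn (χ i) S := by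
    have h2 : ∀ i : ℕ, ContinuousOn (χ i) S ∧ ContinuousOn (χ (i+1)) S := by
      intro i
      induction i with
      | zero =>
        have h0 : ContinuousOn (χ 0) S := by
          have : χ 0 = fun _ => (1:ℝ) := funext hχ0
          rw [this]; exact continuousOn_const
        refine ⟨h0, contχsucc 0 (contφ 0 h0 ?_)⟩
        simp only [if_pos rfl]
        exact continuousOn_const
      | succ n ih =>
        refine ⟨ih.2, contχsucc (n+1) (contφ (n+1) ih.2 ?_)⟩
        simp only [Nat.succ_ne_zero, if_false, Nat.add_sub_cancel]
        exact ih.1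
    exact fun i => (h2 i).1
  -- the main construction for χ (i+1)
  have main : ∀ i : ℕ, ∃ χ' χ'' : ℝ → ℝ,
      ContinuousOn χ' S ∧
      (∀ y ∈ S, HasDerivWithinAt (χ (i+1)) (χ' y) S y) ∧
      χ' a = 0 ∧ χ' b = 0 ∧
      (∀ y ∈ Set.Ioo a b, HasDerivAt χ' (χ'' y) y) ∧
      (∀ y ∈ Set.Ioo a b, D * χ'' y = φ (i+1) y - φbar (i+1)) := by
    intro i
    have hφc : ContinuousOn (φ (i+1)) S := by
      rcases Nat.eq_zero_or_pos i with h0 | hpos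
      · subst h0
        refine contφ 0 (contχ 0) ?_
        simp only [if_pos rfl]; exact continuousOn_const
      · obtain ⟨n, rfl⟩ := Nat.exists_eq_succ_of_ne_zero (Nat.pos_iff_ne_zero.mp hpos)
        refine contφ (n+1) (contχ (n+1)) ?_
        simp only [Nat.succ_ne_zero, if_false, Nat.add_sub_cancel]
        exact contχ n
    set c : ℝ := φbar (i+1) with hc
    set Φ : ℝ → ℝ := fun s => ∫ r in a..s, φ (i+1) r with hΦ
    have hΦc : ContinuousOn Φ S := ftc_icc_cont hφc
    refine ⟨fun y => (1/D) * (Φ y - ((L/2) + y) * c),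
            fun y => (1/D) * (φ (i+1) y - c), ?_, ?_, ?_, ?_, ?_, ?_⟩
    · exact continuousOn_const.mul (hΦc.sub ((Continuous.continuousOn (by fun_prop)).mul
        continuousOn_const))
    · intro y hy
      have heq : χ (i+1) = fun y =>
          (1/D) * ((∫ s in a..y, Φ s) - ((L/2)*y + y^2/2) * c) := funext (hrec i)
      rw [heq]
      have hΨ : HasDerivWithinAt (fun y => ∫ s in a..y, Φ s) (Φ y) S y := ftc_icc hΦc hy
      have hpoly : HasDerivWithinAt (fun y : ℝ => ((L/2)*y + y^2/2) * c)
          (((L/2) + y) * c) S y := by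
        have : HasDerivAt (fun y : ℝ => ((L/2)*y + y^2/2) * c) (((L/2) + y) * c) y := by
          have h1 : HasDerivAt (fun y : ℝ => (L/2)*y + y^2/2) ((L/2) + y) y := by
            have := (((hasDerivAt_id y).const_mul (L/2)).add
              (((hasDerivAt_pow 2 y)).div_const 2))
            convert this using 1
            · rfl
            · rfl
            · funext x; simp
            · norm_num
          exact h1.mul_const c
        exact this.hasDerivWithinAt
      exact (hΨ.sub hpoly).const_mul (1/D)
    · have hΦa : Φ a = 0 := intervalIntegral.integral_same
      show (1:ℝ)/D * (Φ a - ((L/2) + a) * c) = 0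
      rw [hΦa, ha, hb]
      ring
    · have hΦb : Φ b = L * c := by
        rw [hc, hφbar i, hΦ]
        field_simp
      show (1:ℝ)/D * (Φ b - ((L/2) + b) * c) = 0
      rw [hΦb, hb]
      ring
    · intro y hy
      have hΦ' : HasDerivAt Φ (φ (i+1) y) y := ftc_ioo hφc hy
      have hpoly : HasDerivAt (fun y : ℝ => ((L/2) + y) * c) c y := by
        have := ((hasDerivAt_const y (L/2)).add (hasDerivAt_id y)).mul_const c
        simpa using this
      exact (hΦ'.sub hpoly).const_mul (1/D)
    · intro y hy
      field_simp
  refine ⟨?_, ?_⟩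
  · intro i
    cases i with
    | zero =>
      refine ⟨fun _ => 0, continuousOn_const, fun y hy => ?_⟩
      have : χ 0 = fun _ => (1:ℝ) := funext hχ0
      rw [this]
      exact (hasDerivWithinAt_const y S 1)
    | succ n =>
      obtain ⟨χ', _, hc', hd', _, _, _, _⟩ := main n
      exact ⟨χ', hc', hd'⟩
  · intro i
    obtain ⟨χ', χ'', _, h1, h2, h3, h4, h5⟩ := main i
    exact ⟨χ', χ'', h1, h2, h3, h4, h5⟩
end

section
/- Let L > 0, D > 0, ε > 0 and σ, f, ū ∈ ℝ, let u : ℝ → ℝ be continuous on [−L/2, L/2] with transverse average ū, let χ₁ : ℝ → ℝ be twice differentiable on (−L/2, L/2) with D·χ₁″(y) = u(y) − ū there, and let c₀ : ℝ × ℝ → ℝ be infinitely differentiable with ∂_t c₀ + ū·∂_x c₀ + σ·c₀ = f everywhere. Define the first-order HiPhomε approximant C₁(x,y,t) := c₀(x,t) + ε·χ₁(y)·∂_x c₀(x,t). Then for all (x,t) and all y ∈ (−L/2, L/2): ∂_t C₁ − ε·D·(∂_{xx} C₁ + ε^{−2}·∂_{yy} C₁) + u(y)·∂_x C₁ + σ·C₁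 = f + ε·[(u(y) − ū)·χ₁(y) − D]·∂_{xx} c₀(x,t) − ε²·D·χ₁(y)·∂_{x}^{3} c₀(x,t). -/
noncomputable def DvOp (v : ℝ × ℝ) (G : ℝ × ℝ → ℝ) : ℝ × ℝ → ℝ :=
  fun p => fderiv ℝ G p v

lemma DvOp_contDiff (v : ℝ × ℝ) {G : ℝ × ℝ → ℝ} (hG : ContDiff ℝ (⊤ : ℕ∞) G) :
    ContDiff ℝ (⊤ : ℕ∞) (DvOp v G) :=
  (hG.fderiv_right (by simp)).clm_apply contDiff_const

lemma hasDerivAt_fst {G : ℝ × ℝ → ℝ} (hG : ContDiff ℝ (⊤ : ℕ∞) G) (x t : ℝ) :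
    HasDerivAt (fun x' => G (x', t)) (DvOp (1, 0) G (x, t)) x := by
  have h1 : HasFDerivAt G (fderiv ℝ G (x, t)) (x, t) :=
    (hG.differentiable (by simp) (x, t)).hasFDerivAt
  have h2 : HasDerivAt (fun x' : ℝ => (x', t)) ((1 : ℝ), (0 : ℝ)) x :=
    (hasDerivAt_id x).prodMk (hasDerivAt_const x t)
  exact h1.comp_hasDerivAt x h2

lemma hasDerivAt_snd {G : ℝ × ℝ → ℝ} (hG : ContDiff ℝ (⊤ : ℕ∞) G) (x t : ℝ) :
    HasDerivAt (fun t' => G (x, t')) (DvOp (0, 1) G (x, t)) t := by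
  have h1 : HasFDerivAt G (fderiv ℝ G (x, t)) (x, t) :=
    (hG.differentiable (by simp) (x, t)).hasFDerivAt
  have h2 : HasDerivAt (fun t' : ℝ => (x, t')) ((0 : ℝ), (1 : ℝ)) t :=
    (hasDerivAt_const t x).prodMk (hasDerivAt_id t)
  exact h1.comp_hasDerivAt t h2

lemma DvOp_comm {G : ℝ × ℝ → ℝ} (hG : ContDiff ℝ (⊤ : ℕ∞) G) (v w : ℝ × ℝ) (p : ℝ × ℝ) :
    DvOp w (DvOp v G) p = DvOp v (DvOp w G) p := by
  have hd : ∀ q, HasFDerivAt G (fderiv ℝ G q) q := fun q =>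
    (hG.differentiable (by simp) q).hasFDerivAt
  have hG' : ContDiff ℝ (⊤ : ℕ∞) (fderiv ℝ G) := hG.fderiv_right (by simp)
  have h2 : HasFDerivAt (fderiv ℝ G) (fderiv ℝ (fderiv ℝ G) p) p :=
    (hG'.differentiable (by simp) p).hasFDerivAt
  have hsym := second_derivative_symmetric hd h2 v w
  have key : ∀ a b : ℝ × ℝ,
      fderiv ℝ (fun q => fderiv ℝ G q a) p b = (fderiv ℝ (fderiv ℝ G) p b) a := by
    intro a b
    rw [fderiv_clm_apply (hG'.differentiable (by simp) p) (differentiableAt_const a)]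
    simp
  have e1 : DvOp w (DvOp v G) p = (fderiv ℝ (fderiv ℝ G) p w) v := key v w
  have e2 : DvOp v (DvOp w G) p = (fderiv ℝ (fderiv ℝ G) p v) w := key w v
  rw [e1, e2]; exact hsym.symm



/-- Partial derivative in `t` of a function of `(x, t)`. -/
noncomputable def dtOp : (ℝ → ℝ → ℝ) → ℝ → ℝ → ℝ :=
  fun f x t => deriv (fun t' => f x t') t

/-- Exact residual of the first-order HiPhomε approximant
`C₁ = c₀ + ε χ₁ ∂ₓ c₀` under the rescaled advection–diffusion–reaction operator:
`∂ₜ C₁ - ε D (∂ₓₓ C₁ + ε⁻² ∂_{yy} C₁) + u ∂ₓ C₁ + σ C₁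
   = f + ε ((u - ū) χ₁ - D) ∂ₓₓ c₀ - ε² D χ₁ ∂ₓ³ c₀` on `(-L/2, L/2)`. -/
theorem stmt_11 (L D ε σ f : ℝ) (hL : 0 < L) (hD : 0 < D) (hε : 0 < ε)
    (u : ℝ → ℝ) (hu : ContinuousOn u (Set.Icc (-(L/2)) (L/2)))
    (ubar : ℝ) (hubar : ubar = (1/L) * ∫ y in (-(L/2))..(L/2), u y)
    (χ₁ χ₁' χ₁'' : ℝ → ℝ)
    (hχ₁' : ∀ y ∈ Set.Ioo (-(L/2)) (L/2), HasDerivAt χ₁ (χ₁' y) y)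
    (hχ₁'' : ∀ y ∈ Set.Ioo (-(L/2)) (L/2), HasDerivAt χ₁' (χ₁'' y) y)
    (hcell : ∀ y ∈ Set.Ioo (-(L/2)) (L/2), D * χ₁'' y = u y - ubar)
    (c₀ : ℝ → ℝ → ℝ)
    (hsmooth : ContDiff ℝ (⊤ : ℕ∞) (fun p : ℝ × ℝ => c₀ p.1 p.2))
    (hleading : ∀ x t, dtOp c₀ x t + ubar * dxOp c₀ x t + σ * c₀ x t = f)
    (C₁ : ℝ → ℝ → ℝ → ℝ)
    (hC₁ : ∀ x y t, C₁ x y t = c₀ x t + ε * χ₁ y * dxOp c₀ x t) :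
    ∀ (x t : ℝ), ∀ y ∈ Set.Ioo (-(L/2)) (L/2),
      ptOp C₁ x y t - ε * D * (pxxOp C₁ x y t + ε⁻¹ * ε⁻¹ * pyyOp C₁ x y t)
          + u y * pxOp C₁ x y t + σ * C₁ x y t
        = f + ε * ((u y - ubar) * χ₁ y - D) * (dxOp^[2] c₀) x t
            - ε^2 * D * χ₁ y * (dxOp^[3] c₀) x t := by
  
  intro x t y hy
  set F : ℝ × ℝ → ℝ := fun p => c₀ p.1 p.2 with hFdef
  have hF : ContDiff ℝ (⊤ : ℕ∞) F := hsmooth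
  set A : ℝ × ℝ → ℝ := DvOp (1, 0) F with hAdef
  set B : ℝ × ℝ → ℝ := DvOp (0, 1) F with hBdef
  have hA : ContDiff ℝ (⊤ : ℕ∞) A := DvOp_contDiff _ hF
  have hB : ContDiff ℝ (⊤ : ℕ∞) B := DvOp_contDiff _ hF
  set A2 : ℝ × ℝ → ℝ := DvOp (1, 0) A with hA2def
  have hA2 : ContDiff ℝ (⊤ : ℕ∞) A2 := DvOp_contDiff _ hA
  set A3 : ℝ × ℝ → ℝ := DvOp (1, 0) A2 with hA3def
  -- first x-derivative of c₀
  have hdx : ∀ x' t', dxOp c₀ x' t' = A (x', t') := fun x' t' =>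
    (hasDerivAt_fst hF x' t').deriv
  have hdx2 : ∀ x' t', dxOp (dxOp c₀) x' t' = A2 (x', t') := by
    intro x' t'
    have he : (fun x'' => dxOp c₀ x'' t') = fun x'' => A (x'', t') :=
      funext fun x'' => hdx x'' t'
    show deriv (fun x'' => dxOp c₀ x'' t') x' = _
    rw [he]
    exact (hasDerivAt_fst hA x' t').deriv
  have hdx3 : ∀ x' t', dxOp (dxOp (dxOp c₀)) x' t' = A3 (x', t') := by
    intro x' t'
    have he : (fun x'' => dxOp (dxOp c₀) x'' t') = fun x'' => A2 (x'', t') :=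
      funext fun x'' => hdx2 x'' t'
    show deriv (fun x'' => dxOp (dxOp c₀) x'' t') x' = _
    rw [he]
    exact (hasDerivAt_fst hA2 x' t').deriv
  have hdt : ∀ x' t', dtOp c₀ x' t' = B (x', t') := fun x' t' =>
    (hasDerivAt_snd hF x' t').deriv
  -- the leading-order equation in terms of A, B, F
  have hres : ∀ x' t', B (x', t') + ubar * A (x', t') + σ * F (x', t') = f := by
    intro x' t'
    have := hleading x' t'
    rw [hdt, hdx] at this
    exact this
  -- x-derivative of the leading-order relation
  have hDxB : DvOp (1, 0) B (x, t) + ubar * A2 (x, t) + σ * A (x, t) = 0 := by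
    have h1 : HasDerivAt (fun x' => B (x', t) + ubar * A (x', t) + σ * F (x', t))
        (DvOp (1, 0) B (x, t) + ubar * A2 (x, t) + σ * A (x, t)) x :=
      ((hasDerivAt_fst hB x t).add ((hasDerivAt_fst hA x t).const_mul ubar)).add
        ((hasDerivAt_fst hF x t).const_mul σ)
    have h2 : (fun x' => B (x', t) + ubar * A (x', t) + σ * F (x', t)) =
        fun _ => f := funext fun x' => hres x' t
    rw [h2] at h1
    have h3 : HasDerivAt (fun _ : ℝ => f) (0 : ℝ) x := hasDerivAt_const x f
    exact h1.unique h3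
  -- mixed derivative: ∂t A = ∂x B
  have hmix : DvOp (0, 1) A (x, t) = DvOp (1, 0) B (x, t) := DvOp_comm hF _ _ _
  -- compute the operators applied to C₁
  have hpt : ptOp C₁ x y t = B (x, t) + ε * χ₁ y * DvOp (0, 1) A (x, t) := by
    have he : (fun t' => C₁ x y t') = fun t' => F (x, t') + ε * χ₁ y * A (x, t') := by
      funext t'; rw [hC₁, hdx]
    show deriv (fun t' => C₁ x y t') t = _
    rw [he]
    exact ((hasDerivAt_snd hF x t).add
      ((hasDerivAt_snd hA x t).const_mul (ε * χ₁ y))).deriv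
  have hpxval : ∀ x', deriv (fun x'' => C₁ x'' y t) x'
      = A (x', t) + ε * χ₁ y * A2 (x', t) := by
    intro x'
    have he : (fun x'' => C₁ x'' y t) = fun x'' => F (x'', t) + ε * χ₁ y * A (x'', t) := by
      funext x''; rw [hC₁, hdx]
    rw [he]
    exact ((hasDerivAt_fst hF x' t).add
      ((hasDerivAt_fst hA x' t).const_mul (ε * χ₁ y))).deriv
  have hpx : pxOp C₁ x y t = A (x, t) + ε * χ₁ y * A2 (x, t) := hpxval x
  have hpxx : pxxOp C₁ x y t = A2 (x, t) + ε * χ₁ y * A3 (x, t) := by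
    have he : (fun x' => deriv (fun x'' => C₁ x'' y t) x')
        = fun x' => A (x', t) + ε * χ₁ y * A2 (x', t) := funext hpxval
    show deriv (fun x' => deriv (fun x'' => C₁ x'' y t) x') x = _
    rw [he]
    exact ((hasDerivAt_fst hA x t).add
      ((hasDerivAt_fst hA2 x t).const_mul (ε * χ₁ y))).deriv
  have hpyy : pyyOp C₁ x y t = ε * χ₁'' y * A (x, t) := by
    have hinner : ∀ y' ∈ Set.Ioo (-(L/2)) (L/2),
        deriv (fun y'' => C₁ x y'' t) y' = ε * χ₁' y' * A (x, t) := by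
      intro y' hy'
      have he : (fun y'' => C₁ x y'' t)
          = fun y'' => c₀ x t + ε * χ₁ y'' * A (x, t) := by
        funext y''; rw [hC₁, hdx]
      rw [he]
      exact ((((hχ₁' y' hy').const_mul ε).mul_const (A (x, t))).const_add (c₀ x t)).deriv
    have hev : (fun y' => deriv (fun y'' => C₁ x y'' t) y')
        =ᶠ[nhds y] fun y' => ε * χ₁' y' * A (x, t) := by
      filter_upwards [isOpen_Ioo.mem_nhds hy] with y' hy' using hinner y' hy'
    show deriv (fun y' => deriv (fun y'' => C₁ x y'' t) y') y = _
    rw [hev.deriv_eq]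
    exact (((hχ₁'' y hy).const_mul ε).mul_const (A (x, t))).deriv
  have hit2 : (dxOp^[2] c₀) x t = A2 (x, t) := hdx2 x t
  have hit3 : (dxOp^[3] c₀) x t = A3 (x, t) := hdx3 x t
  rw [hpt, hpxx, hpyy, hpx, hC₁, hdx, hit2, hit3, hmix]
  have hcy := hcell y hy
  have hεne : ε ≠ 0 := ne_of_gt hε
  have hres' : B (x, t) + ubar * A (x, t) + σ * c₀ x t = f := hres x t
  field_simp
  linear_combination hres' + (ε * χ₁ y) * hDxB - A (x, t) * hcy
end

section
/- Let L > 0, D > 0, ε > 0 and σ, f, ū ∈ ℝ, let u : ℝ → ℝ be continuous on [−L/2, L/2] with transverse average ū, let χ₁ : ℝ → ℝ be continuous on [−L/2, L/2] and twice differentiable on (−L/2, L/2) with D·χ₁″(y) = u(y) − ū there, and let c₀ : ℝ × ℝ → ℝ be infinitely differentiable with ∂_t c₀ + ū·∂_x c₀ + σ·c₀ = f everywhere. Define C₁(x,y,t) := c₀(x,t) + ε·χ₁(y)·∂_x c₀(x,t) and the Taylor dispersion coefficient D_eff := ε·D + ε·(ū·χ̄₁ − (u·χ₁)‾), where χ̄₁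 and (u·χ₁)‾ are the transverse averages of χ₁ and of y ↦ u(y)·χ₁(y). Then for all (x,t): (1/L)·∫_{−L/2}^{L/2} [∂_t C₁ − ε·D·(∂_{xx} C₁ + ε^{−2}·∂_{yy} C₁) + u(y)·∂_x C₁ + σ·C₁] dy = f − D_eff·∂_{xx} c₀(x,t) − ε²·D·χ̄₁·∂_{x}^{3} c₀(x,t). -/
section helpers
variable {g : ℝ → ℝ → ℝ}

lemma hasDerivAt_slice_x (hg : ContDiff ℝ (⊤ : ℕ∞) (fun p : ℝ × ℝ => g p.1 p.2)) (x t : ℝ) :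
    HasDerivAt (fun x' => g x' t)
      (fderiv ℝ (fun p : ℝ × ℝ => g p.1 p.2) (x, t) (1, 0)) x := by
  have h := ((hg.differentiable (by simp)) (x, t)).hasFDerivAt
  have hline : HasDerivAt (fun x' : ℝ => ((x', t) : ℝ × ℝ)) ((1 : ℝ), (0 : ℝ)) x :=
    (hasDerivAt_id x).prodMk (hasDerivAt_const x t)
  exact h.comp_hasDerivAt x hline

lemma hasDerivAt_slice_t (hg : ContDiff ℝ (⊤ : ℕ∞) (fun p : ℝ × ℝ => g p.1 p.2)) (x t : ℝ) :
    HasDerivAt (fun t' => g x t')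
      (fderiv ℝ (fun p : ℝ × ℝ => g p.1 p.2) (x, t) (0, 1)) t := by
  have h := ((hg.differentiable (by simp)) (x, t)).hasFDerivAt
  have hline : HasDerivAt (fun t' : ℝ => ((x, t') : ℝ × ℝ)) ((0 : ℝ), (1 : ℝ)) t :=
    (hasDerivAt_const t x).prodMk (hasDerivAt_id t)
  exact h.comp_hasDerivAt t hline

lemma dxOp_eq (hg : ContDiff ℝ (⊤ : ℕ∞) (fun p : ℝ × ℝ => g p.1 p.2)) (x t : ℝ) :
    dxOp g x t = fderiv ℝ (fun p : ℝ × ℝ => g p.1 p.2) (x, t) (1, 0) :=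
  (hasDerivAt_slice_x hg x t).deriv

lemma dtOp_eq (hg : ContDiff ℝ (⊤ : ℕ∞) (fun p : ℝ × ℝ => g p.1 p.2)) (x t : ℝ) :
    dtOp g x t = fderiv ℝ (fun p : ℝ × ℝ => g p.1 p.2) (x, t) (0, 1) :=
  (hasDerivAt_slice_t hg x t).deriv

lemma contDiff_fderiv_apply (hg : ContDiff ℝ (⊤ : ℕ∞) (fun p : ℝ × ℝ => g p.1 p.2)) (v : ℝ × ℝ) :
    ContDiff ℝ (⊤ : ℕ∞) (fun p : ℝ × ℝ => fderiv ℝ (fun q : ℝ × ℝ => g q.1 q.2) p v) :=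
  (hg.fderiv_right (by simp)).clm_apply contDiff_const

lemma contDiff_dx (hg : ContDiff ℝ (⊤ : ℕ∞) (fun p : ℝ × ℝ => g p.1 p.2)) :
    ContDiff ℝ (⊤ : ℕ∞) (fun p : ℝ × ℝ => dxOp g p.1 p.2) := by
  have h1 := contDiff_fderiv_apply hg (1, 0)
  have : (fun p : ℝ × ℝ => dxOp g p.1 p.2)
      = fun p : ℝ × ℝ => fderiv ℝ (fun q : ℝ × ℝ => g q.1 q.2) p (1, 0) :=
    funext fun p => dxOp_eq hg p.1 p.2
  rw [this]; exact h1

lemma contDiff_dt (hg : ContDiff ℝ (⊤ : ℕ∞) (fun p : ℝ × ℝ => g p.1 p.2)) :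
    ContDiff ℝ (⊤ : ℕ∞) (fun p : ℝ × ℝ => dtOp g p.1 p.2) := by
  have h1 := contDiff_fderiv_apply hg (0, 1)
  have : (fun p : ℝ × ℝ => dtOp g p.1 p.2)
      = fun p : ℝ × ℝ => fderiv ℝ (fun q : ℝ × ℝ => g q.1 q.2) p (0, 1) :=
    funext fun p => dtOp_eq hg p.1 p.2
  rw [this]; exact h1

lemma fderiv_fderiv_apply (hg : ContDiff ℝ (⊤ : ℕ∞) (fun p : ℝ × ℝ => g p.1 p.2))
    (q v w : ℝ × ℝ) :
    fderiv ℝ (fun p : ℝ × ℝ => fderiv ℝ (fun r : ℝ × ℝ => g r.1 r.2) p v) q w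
      = fderiv ℝ (fderiv ℝ (fun r : ℝ × ℝ => g r.1 r.2)) q w v := by
  set P := fun p : ℝ × ℝ => g p.1 p.2
  have hP2 : DifferentiableAt ℝ (fderiv ℝ P) q :=
    ((hg.fderiv_right (m := (⊤ : ℕ∞)) (by simp)).differentiable (by simp)) q
  have h := ((ContinuousLinearMap.apply ℝ ℝ v).hasFDerivAt.comp q hP2.hasFDerivAt)
  have h2 : HasFDerivAt (fun p => fderiv ℝ P p v)
      (((ContinuousLinearMap.apply ℝ ℝ) v).comp (fderiv ℝ (fderiv ℝ P) q)) q := h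
  rw [h2.fderiv]
  rfl

lemma schwarz (hg : ContDiff ℝ (⊤ : ℕ∞) (fun p : ℝ × ℝ => g p.1 p.2)) (x t : ℝ) :
    dtOp (dxOp g) x t = dxOp (dtOp g) x t := by
  set P := fun p : ℝ × ℝ => g p.1 p.2 with hP
  have hdx := contDiff_dx hg
  have hdt := contDiff_dt hg
  have e1 : dtOp (dxOp g) x t = fderiv ℝ (fun p : ℝ × ℝ => dxOp g p.1 p.2) (x, t) (0, 1) :=
    dtOp_eq hdx x t
  have e2 : dxOp (dtOp g) x t = fderiv ℝ (fun p : ℝ × ℝ => dtOp g p.1 p.2) (x, t) (1, 0) :=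
    dxOp_eq hdt x t
  have f1 : (fun p : ℝ × ℝ => dxOp g p.1 p.2) = fun p => fderiv ℝ P p (1, 0) :=
    funext fun p => dxOp_eq hg p.1 p.2
  have f2 : (fun p : ℝ × ℝ => dtOp g p.1 p.2) = fun p => fderiv ℝ P p (0, 1) :=
    funext fun p => dtOp_eq hg p.1 p.2
  rw [e1, e2, f1, f2, fderiv_fderiv_apply hg (x, t) (1, 0) (0, 1),
    fderiv_fderiv_apply hg (x, t) (0, 1) (1, 0)]
  exact second_derivative_symmetric (f := P) (fun y => ((hg.differentiable (by simp)) y).hasFDerivAt)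
    (((hg.fderiv_right (m := (⊤ : ℕ∞)) (by simp)).differentiable (by simp) (x, t)).hasFDerivAt) _ _

lemma contDiff_slice_x (hg : ContDiff ℝ (⊤ : ℕ∞) (fun p : ℝ × ℝ => g p.1 p.2)) (t : ℝ) :
    ContDiff ℝ (⊤ : ℕ∞) (fun x => g x t) :=
  hg.comp (contDiff_id.prodMk contDiff_const)

lemma contDiff_slice_t (hg : ContDiff ℝ (⊤ : ℕ∞) (fun p : ℝ × ℝ => g p.1 p.2)) (x : ℝ) :
    ContDiff ℝ (⊤ : ℕ∞) (fun t => g x t) :=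
  hg.comp (contDiff_const.prodMk contDiff_id)

end helpers
/-- Emergence of the Taylor dispersion coefficient: the transverse
average of the rescaled advection–diffusion–reaction operator applied to the
first-order two-scale approximant `C₁ = c₀ + ε χ₁ ∂ₓ c₀` equals
`f - D_eff ∂ₓₓ c₀ - ε² D χ̄₁ ∂ₓ³ c₀`, where
`D_eff = ε D + ε (ū χ̄₁ - (u χ₁)‾)`. -/
theorem stmt_12 (L D ε σ f : ℝ) (hL : 0 < L) (hD : 0 < D) (hε : 0 < ε)
    (u : ℝ → ℝ) (hu : ContinuousOn u (Set.Icc (-(L/2)) (L/2)))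
    (ubar : ℝ) (hubar : ubar = (1/L) * ∫ y in (-(L/2))..(L/2), u y)
    (χ₁ χ₁' χ₁'' : ℝ → ℝ)
    (hχ₁cont : ContinuousOn χ₁ (Set.Icc (-(L/2)) (L/2)))
    (hχ₁' : ∀ y ∈ Set.Ioo (-(L/2)) (L/2), HasDerivAt χ₁ (χ₁' y) y)
    (hχ₁'' : ∀ y ∈ Set.Ioo (-(L/2)) (L/2), HasDerivAt χ₁' (χ₁'' y) y)
    (hcell : ∀ y ∈ Set.Ioo (-(L/2)) (L/2), D * χ₁'' y = u y - ubar)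
    (c₀ : ℝ → ℝ → ℝ)
    (hsmooth : ContDiff ℝ (⊤ : ℕ∞) (fun p : ℝ × ℝ => c₀ p.1 p.2))
    (hleading : ∀ x t, dtOp c₀ x t + ubar * dxOp c₀ x t + σ * c₀ x t = f)
    (C₁ : ℝ → ℝ → ℝ → ℝ)
    (hC₁ : ∀ x y t, C₁ x y t = c₀ x t + ε * χ₁ y * dxOp c₀ x t)
    (χ₁bar uχ₁bar Deff : ℝ)
    (hχ₁bar : χ₁bar = (1/L) * ∫ y in (-(L/2))..(L/2), χ₁ y)
    (huχ₁bar : uχ₁bar = (1/L) * ∫ y in (-(L/2))..(L/2), u y * χ₁ y)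
    (hDeff : Deff = ε * D + ε * (ubar * χ₁bar - uχ₁bar)) :
    ∀ (x t : ℝ),
      (1/L) * (∫ y in (-(L/2))..(L/2),
          (ptOp C₁ x y t - ε * D * (pxxOp C₁ x y t + ε⁻¹ * ε⁻¹ * pyyOp C₁ x y t)
            + u y * pxOp C₁ x y t + σ * C₁ x y t))
        = f - Deff * (dxOp^[2] c₀) x t - ε^2 * D * χ₁bar * (dxOp^[3] c₀) x t := by
  intro x t
  have hL' : L ≠ 0 := ne_of_gt hL
  have hε' : ε ≠ 0 := ne_of_gt hε
  have hab : -(L/2) ≤ L/2 := by linarith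
  -- smoothness of iterated x-derivatives
  have hdx : ContDiff ℝ (⊤ : ℕ∞) (fun p : ℝ × ℝ => dxOp c₀ p.1 p.2) := contDiff_dx hsmooth
  have hdxx : ContDiff ℝ (⊤ : ℕ∞) (fun p : ℝ × ℝ => dxOp (dxOp c₀) p.1 p.2) := contDiff_dx hdx
  have hdt : ContDiff ℝ (⊤ : ℕ∞) (fun p : ℝ × ℝ => dtOp c₀ p.1 p.2) := contDiff_dt hsmooth
  -- shorthand
  set a₁ := dxOp c₀ x t with ha₁
  set a₂ := dxOp (dxOp c₀) x t with ha₂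
  set a₃ := dxOp (dxOp (dxOp c₀)) x t with ha₃
  -- pointwise value of ptOp C₁
  have hpt : ∀ y : ℝ, ptOp C₁ x y t = dtOp c₀ x t + ε * χ₁ y * dtOp (dxOp c₀) x t := by
    intro y
    have h1 : DifferentiableAt ℝ (fun t' => c₀ x t') t :=
      ((contDiff_slice_t hsmooth x).differentiable (by simp)) t
    have h2 : DifferentiableAt ℝ (fun t' => dxOp c₀ x t') t :=
      ((contDiff_slice_t hdx x).differentiable (by simp)) t
    have hfun : (fun t' => C₁ x y t') = fun t' => c₀ x t' + ε * χ₁ y * dxOp c₀ x t' :=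
      funext fun t' => hC₁ x y t'
    show deriv (fun t' => C₁ x y t') t = _
    rw [hfun, deriv_fun_add h1 (h2.const_mul (ε * χ₁ y)), deriv_const_mul _ h2]
    rfl
  -- pointwise value of pxOp C₁ at arbitrary x'
  have hpx' : ∀ (x' y : ℝ), deriv (fun x'' => C₁ x'' y t) x'
      = dxOp c₀ x' t + ε * χ₁ y * dxOp (dxOp c₀) x' t := by
    intro x' y
    have h1 : DifferentiableAt ℝ (fun x'' => c₀ x'' t) x' :=
      ((contDiff_slice_x hsmooth t).differentiable (by simp)) x'
    have h2 : DifferentiableAt ℝ (fun x'' => dxOp c₀ x'' t) x' :=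
      ((contDiff_slice_x hdx t).differentiable (by simp)) x'
    have hfun : (fun x'' => C₁ x'' y t) = fun x'' => c₀ x'' t + ε * χ₁ y * dxOp c₀ x'' t :=
      funext fun x'' => hC₁ x'' y t
    rw [hfun, deriv_fun_add h1 (h2.const_mul (ε * χ₁ y)), deriv_const_mul _ h2]
    rfl
  have hpx : ∀ y : ℝ, pxOp C₁ x y t = a₁ + ε * χ₁ y * a₂ := fun y => hpx' x y
  -- pxxOp
  have hpxx : ∀ y : ℝ, pxxOp C₁ x y t = a₂ + ε * χ₁ y * a₃ := by
    intro y
    have h1 : DifferentiableAt ℝ (fun x' => dxOp c₀ x' t) x :=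
      ((contDiff_slice_x hdx t).differentiable (by simp)) x
    have h2 : DifferentiableAt ℝ (fun x' => dxOp (dxOp c₀) x' t) x :=
      ((contDiff_slice_x hdxx t).differentiable (by simp)) x
    have hfun : (fun x' => deriv (fun x'' => C₁ x'' y t) x')
        = fun x' => dxOp c₀ x' t + ε * χ₁ y * dxOp (dxOp c₀) x' t :=
      funext fun x' => hpx' x' y
    show deriv (fun x' => deriv (fun x'' => C₁ x'' y t) x') x = _
    rw [hfun, deriv_fun_add h1 (h2.const_mul (ε * χ₁ y)), deriv_const_mul _ h2]
    rfl
  -- pyyOp on the open interval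
  have hpyy : ∀ y ∈ Set.Ioo (-(L/2)) (L/2), pyyOp C₁ x y t = ε * χ₁'' y * a₁ := by
    intro y hy
    have hinner : ∀ y' ∈ Set.Ioo (-(L/2)) (L/2),
        HasDerivAt (fun y'' => C₁ x y'' t) (ε * χ₁' y' * a₁) y' := by
      intro y' hy'
      have hfun : (fun y'' => C₁ x y'' t) = fun y'' => c₀ x t + ε * χ₁ y'' * a₁ :=
        funext fun y'' => hC₁ x y'' t
      rw [hfun]
      exact (((hχ₁' y' hy').const_mul ε).mul_const a₁).const_add (c₀ x t)
    have hev : (fun y' => deriv (fun y'' => C₁ x y'' t) y')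
        =ᶠ[nhds y] fun y' => ε * χ₁' y' * a₁ := by
      filter_upwards [isOpen_Ioo.mem_nhds hy] with y' hy'
      exact (hinner y' hy').deriv
    show deriv (fun y' => deriv (fun y'' => C₁ x y'' t) y') y = _
    rw [hev.deriv_eq]
    exact (((hχ₁'' y hy).const_mul ε).mul_const a₁).deriv
  -- differentiated leading-order equation
  have hlead' : dxOp (dtOp c₀) x t + ubar * a₂ + σ * a₁ = 0 := by
    have h1 : DifferentiableAt ℝ (fun x' => dtOp c₀ x' t) x :=
      ((contDiff_slice_x hdt t).differentiable (by simp)) x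
    have h2 : DifferentiableAt ℝ (fun x' => dxOp c₀ x' t) x :=
      ((contDiff_slice_x hdx t).differentiable (by simp)) x
    have h3 : DifferentiableAt ℝ (fun x' => c₀ x' t) x :=
      ((contDiff_slice_x hsmooth t).differentiable (by simp)) x
    have hfun : (fun x' => dtOp c₀ x' t + ubar * dxOp c₀ x' t + σ * c₀ x' t)
        = fun _ => f := funext fun x' => hleading x' t
    have := congrArg (fun F => deriv F x) hfun
    simp only [deriv_const] at this
    rw [deriv_fun_add (f := fun x' => dtOp c₀ x' t + ubar * dxOp c₀ x' t) (h1.add (h2.const_mul ubar)) (h3.const_mul σ),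
      deriv_fun_add h1 (h2.const_mul ubar), deriv_const_mul _ h2, deriv_const_mul _ h3] at this
    exact this
  have hsch : dtOp (dxOp c₀) x t = dxOp (dtOp c₀) x t := schwarz hsmooth x t
  -- the integrand on the open interval
  set K₀ : ℝ := f - ε * D * a₂ with hK₀
  set K₁ : ℝ := ε * dtOp (dxOp c₀) x t + ε * σ * a₁ - ε^2 * D * a₃ with hK₁
  have key : ∀ y ∈ Set.Ioo (-(L/2)) (L/2),
      ptOp C₁ x y t - ε * D * (pxxOp C₁ x y t + ε⁻¹ * ε⁻¹ * pyyOp C₁ x y t)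
        + u y * pxOp C₁ x y t + σ * C₁ x y t
      = K₀ + χ₁ y * K₁ + u y * χ₁ y * (ε * a₂) := by
    intro y hy
    rw [hpt y, hpx y, hpxx y, hpyy y hy, hC₁, hK₀, hK₁]
    have hc := hcell y hy
    have hf := hleading x t
    field_simp
    linear_combination hf - a₁ * hc
  -- rewrite the integral
  have hint : (∫ y in (-(L/2))..(L/2),
      (ptOp C₁ x y t - ε * D * (pxxOp C₁ x y t + ε⁻¹ * ε⁻¹ * pyyOp C₁ x y t)
        + u y * pxOp C₁ x y t + σ * C₁ x y t))
      = ∫ y in (-(L/2))..(L/2), (K₀ + χ₁ y * K₁ + u y * χ₁ y * (ε * a₂)) := by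
    apply intervalIntegral.integral_congr_ae
    have h0 : ({(L/2 : ℝ)}ᶜ : Set ℝ) ∈ MeasureTheory.ae MeasureTheory.volume :=
      MeasureTheory.compl_mem_ae_iff.mpr (MeasureTheory.measure_singleton _)
    filter_upwards [h0] with y hy1 hy2
    rw [Set.uIoc_of_le hab] at hy2
    exact key y ⟨hy2.1, lt_of_le_of_ne hy2.2 hy1⟩
  have hIcc : Set.uIcc (-(L/2)) (L/2) = Set.Icc (-(L/2)) (L/2) := Set.uIcc_of_le hab
  have i1 : IntervalIntegrable (fun y => χ₁ y * K₁) MeasureTheory.volume (-(L/2)) (L/2) :=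
    by apply ContinuousOn.intervalIntegrable; rw [hIcc]; exact hχ₁cont.mul continuousOn_const
  have i2 : IntervalIntegrable (fun y => u y * χ₁ y * (ε * a₂))
      MeasureTheory.volume (-(L/2)) (L/2) :=
    by apply ContinuousOn.intervalIntegrable; rw [hIcc]; exact (hu.mul hχ₁cont).mul continuousOn_const
  have hsplit : (∫ y in (-(L/2))..(L/2), (K₀ + χ₁ y * K₁ + u y * χ₁ y * (ε * a₂)))
      = L * K₀ + (∫ y in (-(L/2))..(L/2), χ₁ y) * K₁
        + (∫ y in (-(L/2))..(L/2), u y * χ₁ y) * (ε * a₂) := by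
    rw [intervalIntegral.integral_add (intervalIntegrable_const.add i1) i2,
      intervalIntegral.integral_add intervalIntegrable_const i1,
      intervalIntegral.integral_const, intervalIntegral.integral_mul_const,
      intervalIntegral.integral_mul_const]
    have : (L/2 - -(L/2)) = L := by ring
    rw [this, smul_eq_mul]
  -- eliminate the mixed derivative from K₁
  have hK₁' : K₁ = -(ε * ubar * a₂) - ε^2 * D * a₃ := by
    rw [hK₁, hsch]
    linear_combination ε * hlead'
  -- finish
  have h2 : (dxOp^[2] c₀) x t = a₂ := by
    simp only [ha₂]
    norm_num [Function.iterate_succ_apply', Function.iterate_one]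
  have h3 : (dxOp^[3] c₀) x t = a₃ := by
    simp only [ha₃]
    norm_num [Function.iterate_succ_apply', Function.iterate_one]
  rw [hint, hsplit, hK₁', h2, h3, hK₀, hDeff, hχ₁bar, huχ₁bar]
  field_simp
  ring
end

section
/- Let L > 0, D > 0 and B ∈ ℝ, let u : ℝ → ℝ be continuous on [−L/2, L/2] with transverse average ū, and let χ denote the explicit corrector for φ = u, i.e. χ(y) := (1/D)·(Ψ(y) − ((L/2)·y + y²/2)·ū) with Φ(y) := ∫_{−L/2}^{y} u(s) ds and Ψ(y) := ∫_{−L/2}^{y} Φ(s) ds. Suppose w : ℝ → ℝ is continuously differentiable on [−L/2, L/2], with w′ differentiable on (−L/2, L/2), and satisfies D·w″(y) = (u(y) − ū)·B for all y ∈ (−L/2, L/2) and w′(−L/2) = 0. Then there is a constant b ∈ ℝ such that w(y) = χ(y)·B + b for all y ∈ [−L/2, L/2]; specifically b = w(−L/2) − χ(−L/2)·B. -/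
open Set intervalIntegral MeasureTheory

/-- A function continuous on `Icc a b` with zero derivative on `Ioo a b` is constant. -/
lemma aux_const {a b : ℝ} (f : ℝ → ℝ) (hc : ContinuousOn f (Set.Icc a b))
    (hd : ∀ x ∈ Set.Ioo a b, HasDerivAt f 0 x) :
    ∀ y ∈ Set.Icc a b, f y = f a := by
  intro y hy
  rcases eq_or_lt_of_le hy.1 with h | h
  · rw [← h]
  · obtain ⟨c, _, hc0⟩ := exists_hasDerivAt_eq_slope f (fun _ => 0) h
      (hc.mono (Set.Icc_subset_Icc le_rfl hy.2))
      (fun x hx => hd x ⟨hx.1, lt_of_lt_of_le hx.2 hy.2⟩)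
    rcases div_eq_zero_iff.mp hc0.symm with h0 | h0
    · linarith [sub_eq_zero.mp h0]
    · exact absurd h0 (by intro h0; linarith [sub_eq_zero.mp h0])

/-- Separated representation of the first-order term of the
two-scale expansion: if `D w'' = (u - ū) B` on `(-L/2, L/2)` with `w'(-L/2) = 0`
(`w` being C¹ on `[-L/2, L/2]`), and `χ` is the explicit corrector for `φ = u`,
namely `χ(y) = (1/D)(Ψ(y) - ((L/2)y + y²/2) ū)`, then `w = χ·B + b` on
`[-L/2, L/2]` for the constant `b = w(-L/2) - χ(-L/2)·B`. -/
theorem stmt_13 (L D B : ℝ) (hL : 0 < L) (hD : 0 < D)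
    (u : ℝ → ℝ) (hu : ContinuousOn u (Set.Icc (-(L/2)) (L/2)))
    (ubar : ℝ) (hubar : ubar = (1/L) * ∫ y in (-(L/2))..(L/2), u y)
    (Φ Ψ χ : ℝ → ℝ)
    (hΦ : ∀ y, Φ y = ∫ s in (-(L/2))..y, u s)
    (hΨ : ∀ y, Ψ y = ∫ s in (-(L/2))..y, Φ s)
    (hχ : ∀ y, χ y = (1/D) * (Ψ y - ((L/2)*y + y^2/2) * ubar))
    (w w' w'' : ℝ → ℝ)
    (hw : ∀ y ∈ Set.Icc (-(L/2)) (L/2),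
      HasDerivWithinAt w (w' y) (Set.Icc (-(L/2)) (L/2)) y)
    (hw' : ContinuousOn w' (Set.Icc (-(L/2)) (L/2)))
    (hw'' : ∀ y ∈ Set.Ioo (-(L/2)) (L/2), HasDerivAt w' (w'' y) y)
    (heq : ∀ y ∈ Set.Ioo (-(L/2)) (L/2), D * w'' y = (u y - ubar) * B)
    (hb : w' (-(L/2)) = 0) :
    ∃ b : ℝ, (∀ y ∈ Set.Icc (-(L/2)) (L/2), w y = χ y * B + b) ∧
      b = w (-(L/2)) - χ (-(L/2)) * B := by
  set a : ℝ := -(L/2) with ha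
  set c : ℝ := L/2 with hc
  have hac : a ≤ c := by rw [ha, hc]; linarith
  have hD0 : D ≠ 0 := ne_of_gt hD
  -- interval integrability of u on a..y for y ∈ Icc a c
  have hu_int : ∀ y ∈ Set.Icc a c, IntervalIntegrable u volume a y := by
    intro y hy
    apply ContinuousOn.intervalIntegrable
    rw [Set.uIcc_of_le hy.1]
    exact hu.mono (Set.Icc_subset_Icc le_rfl hy.2)
  -- continuity of Φ on Icc a c
  have hΦcont : ContinuousOn Φ (Set.Icc a c) := by
    have h1 := continuousOn_primitive_interval' (hu_int c ⟨hac, le_rfl⟩)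
      (Set.left_mem_uIcc (a := a) (b := c))
    rw [Set.uIcc_of_le hac] at h1
    exact h1.congr (fun y _ => hΦ y)
  -- derivative of Φ at interior points
  have hΦderiv : ∀ y ∈ Set.Ioo a c, HasDerivAt Φ (u y) y := by
    intro y hy
    have key : HasDerivAt (fun x => ∫ s in a..x, u s) (u y) y :=
      integral_hasDerivAt_right (hu_int y ⟨hy.1.le, hy.2.le⟩)
        ((hu.mono Set.Ioo_subset_Icc_self).stronglyMeasurableAtFilter isOpen_Ioo y hy)
        (hu.continuousAt (Icc_mem_nhds hy.1 hy.2))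
    exact key.congr_of_eventuallyEq (Filter.Eventually.of_forall (fun x => hΦ x))
  -- interval integrability of Φ
  have hΦ_int : ∀ y ∈ Set.Icc a c, IntervalIntegrable Φ volume a y := by
    intro y hy
    apply ContinuousOn.intervalIntegrable
    rw [Set.uIcc_of_le hy.1]
    exact hΦcont.mono (Set.Icc_subset_Icc le_rfl hy.2)
  -- continuity of Ψ on Icc a c
  have hΨcont : ContinuousOn Ψ (Set.Icc a c) := by
    have h1 := continuousOn_primitive_interval' (hΦ_int c ⟨hac, le_rfl⟩)
      (Set.left_mem_uIcc (a := a) (b := c))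
    rw [Set.uIcc_of_le hac] at h1
    exact h1.congr (fun y _ => hΨ y)
  -- derivative of Ψ at interior points
  have hΨderiv : ∀ y ∈ Set.Ioo a c, HasDerivAt Ψ (Φ y) y := by
    intro y hy
    have key : HasDerivAt (fun x => ∫ s in a..x, Φ s) (Φ y) y :=
      integral_hasDerivAt_right (hΦ_int y ⟨hy.1.le, hy.2.le⟩)
        ((hΦcont.mono Set.Ioo_subset_Icc_self).stronglyMeasurableAtFilter isOpen_Ioo y hy)
        (hΦcont.continuousAt (Icc_mem_nhds hy.1 hy.2))
    exact key.congr_of_eventuallyEq (Filter.Eventually.of_forall (fun x => hΨ x))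
  -- step 1: w' y = (1/D) * (Φ y - (c + y) * ubar) * B on Icc a c
  have step1 : ∀ y ∈ Set.Icc a c,
      w' y = (1/D) * (Φ y - (c + y) * ubar) * B := by
    have hcst := aux_const (a := a) (b := c)
      (fun y => w' y - (1/D) * (Φ y - (c + y) * ubar) * B)
      (hw'.sub ((continuousOn_const.mul (hΦcont.sub
        ((continuousOn_const.add continuousOn_id).mul continuousOn_const))).mul
        continuousOn_const))
      (by
        intro x hx
        have hlin : HasDerivAt (fun y => (c + y) * ubar) ubar x := by
          simpa using (((hasDerivAt_id x).const_add c).mul_const ubar)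
        have hin : HasDerivAt (fun y => (1/D) * (Φ y - (c + y) * ubar) * B)
            ((1/D) * (u x - ubar) * B) x :=
          (((hΦderiv x hx).sub hlin).const_mul (1/D)).mul_const B
        have := (hw'' x hx).sub hin
        have hz : w'' x - (1/D) * (u x - ubar) * B = 0 := by
          have hq := heq x hx
          field_simp
          linarith
        rwa [hz] at this)
    intro y hy
    have h0 : w' y - (1/D) * (Φ y - (c + y) * ubar) * B
        = w' a - (1/D) * (Φ a - (c + a) * ubar) * B := hcst y hy
    have hΦa : Φ a = 0 := by rw [hΦ a, intervalIntegral.integral_same]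
    have hca : c + a = 0 := by rw [ha, hc]; ring
    rw [hb, hΦa, hca] at h0
    simp only [one_div] at h0 ⊢
    simp at h0
    linarith
  -- step 2: w y - χ y * B is constant on Icc a c
  have hχcont : ContinuousOn χ (Set.Icc a c) := by
    refine ContinuousOn.congr ?_ (fun y _ => hχ y)
    exact continuousOn_const.mul (hΨcont.sub (((continuousOn_const.mul continuousOn_id).add
      ((continuousOn_id.pow 2).div_const 2)).mul continuousOn_const))
  have hwcont : ContinuousOn w (Set.Icc a c) := fun y hy => (hw y hy).continuousWithinAt
  have step2 := aux_const (a := a) (b := c) (fun y => w y - χ y * B)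
    (hwcont.sub (hχcont.mul continuousOn_const))
    (by
      intro x hx
      have hwx : HasDerivAt w (w' x) x :=
        (hw x (Set.Ioo_subset_Icc_self hx)).hasDerivAt (Icc_mem_nhds hx.1 hx.2)
      have hpoly : HasDerivAt (fun y => ((L/2)*y + y^2/2) * ubar) ((c + x) * ubar) x := by
        have h1 : HasDerivAt (fun y : ℝ => (L/2)*y + y^2/2) (c + x) x := by
          have := (((hasDerivAt_id x).const_mul (L/2)).add ((hasDerivAt_pow 2 x).div_const 2))
          simpa [hc, Pi.add_def] using this.congr_deriv (by push_cast; ring)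
        exact h1.mul_const ubar
      have hχx : HasDerivAt χ ((1/D) * (Φ x - (c + x) * ubar)) x := by
        have key : HasDerivAt (fun y => (1/D) * (Ψ y - ((L/2)*y + y^2/2) * ubar))
            ((1/D) * (Φ x - (c + x) * ubar)) x :=
          ((hΨderiv x hx).sub hpoly).const_mul (1/D)
        exact key.congr_of_eventuallyEq (Filter.Eventually.of_forall (fun y => hχ y))
      have hcomb := hwx.sub (hχx.mul_const B)
      have hz : w' x - (1/D) * (Φ x - (c + x) * ubar) * B = 0 := by
        rw [step1 x (Set.Ioo_subset_Icc_self hx)]; ring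
      rwa [hz] at hcomb)
  refine ⟨w a - χ a * B, ?_, rfl⟩
  intro y hy
  have h2 : w y - χ y * B = w a - χ a * B := step2 y hy
  linarith
end
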